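/- arXiv:2106.14872 — 4 statements merged into one kernel-verified Lean document; each statement's English description precedes it below -/
import Mathlib

section
/- Sufficient Condition for Linear Chaos: Let X be a (real or complex) infinite-dimensional separable Banach space and let A be a densely defined linear operator in X such that every power A^n (n ∈ ℕ) is a closed operator. Suppose there exist a set Y ⊆ C^∞(A) dense in X and a mapping B : Y → Y such that (1) ABf = f for every f ∈ Y, and (2) for every f ∈ Y there exist α = α(f) ∈ (0,1) and c = c(f,α) > 0 with max(‖A^n f‖, ‖B^n f‖) ≤ c·α^n for all n ∈ ℕ. Then A is chaotic. -/
open Filter Topology TopologicalSpace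

/-- The domain of the `n`-th power of the operator `A` with domain `D`:
`x ∈ D(Aⁿ)` iff `Aᵏx ∈ D(A)` for all `k < n`. -/
def opDom {X : Type*} (A : X → X) (D : Set X) (n : ℕ) : Set X :=
  {x | ∀ k < n, A^[k] x ∈ D}

/-- `C^∞(A) = ⋂ₙ D(Aⁿ)`. -/
def opCinf {X : Type*} (A : X → X) (D : Set X) : Set X :=
  {x | ∀ k : ℕ, A^[k] x ∈ D}

/-- `A` is linear on the subspace `D`. -/
def IsLinearOn (𝕜 : Type*) {X : Type*} [RCLike 𝕜] [NormedAddCommGroup X]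
    [NormedSpace 𝕜 X] (A : X → X) (D : Set X) : Prop :=
  (∀ x ∈ D, ∀ y ∈ D, A (x + y) = A x + A y) ∧
  (∀ (c : 𝕜), ∀ x ∈ D, A (c • x) = c • A x)

/-- The `n`-th power of `A` (with domain `D`) is a closed operator:
its graph is closed in `X × X`. -/
def ClosedPower {X : Type*} [NormedAddCommGroup X] (A : X → X) (D : Set X)
    (n : ℕ) : Prop :=
  IsClosed {p : X × X | p.1 ∈ opDom A D n ∧ p.2 = A^[n] p.1}

/-- A hypercyclic vector for `A`: a nonzero `f ∈ C^∞(A)` with dense orbit. -/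
def HypercyclicVec {X : Type*} [NormedAddCommGroup X] (A : X → X) (D : Set X)
    (f : X) : Prop :=
  f ∈ opCinf A D ∧ f ≠ 0 ∧ Dense (Set.range fun n : ℕ => A^[n] f)

/-- `A` (with domain `D`) is hypercyclic. -/
def HypercyclicOp {X : Type*} [NormedAddCommGroup X] (A : X → X) (D : Set X) :
    Prop :=
  ∃ f, HypercyclicVec A D f

/-- `f` is a periodic point of `A`: `f ∈ D(A^N)` and `A^N f = f` for some `N ≥ 1`. -/
def PeriodicPt {X : Type*} (A : X → X) (D : Set X) (f : X) : Prop :=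
  ∃ N : ℕ, 0 < N ∧ f ∈ opDom A D N ∧ A^[N] f = f

/-- `A` (with domain `D`) is chaotic: hypercyclic with a dense set of periodic
points. -/
def ChaoticOp {X : Type*} [NormedAddCommGroup X] (A : X → X) (D : Set X) : Prop :=
  HypercyclicOp A D ∧ Dense {f | PeriodicPt A D f}

/-!
For `f ∈ Y` let `k ↦ fₖ` be the two-sided orbit `fₖ = Aᵏ f` (`k ≥ 0`), `fₖ = B⁻ᵏ f` (`k < 0`).
Because `AB = I` on `Y`, `A` shifts it, `A fₖ = fₖ₊₁`, and by the decay hypothesis `‖fₖ‖` decays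
geometrically in `|k|`. As `Aⁿ` is additive and closed, it may be applied termwise to convergent
series. Hence `∑ₘ f_{mN}` is `N`-periodic and tends to `f` as `N → ∞`, so periodic points are
dense. For hypercyclicity take a dense sequence `yⱼ` in `Y` in which every term recurs infinitely
often, and `f = ∑ᵢ (yᵢ)_{-nᵢ}` for a sufficiently sparse sequence `nᵢ`: then
`A^{nⱼ} f = ∑ᵢ (yᵢ)_{nⱼ - nᵢ}` differs from `yⱼ` by a series of small terms.
-/

open Set Function

section Domains

variable {X : Type*} {A : X → X} {D : Set X}

theorem opCinf_subset_opDom (n : ℕ) : opCinf A D ⊆ opDom A D n :=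
  fun _ hx k _ => hx k

theorem iterate_mem_opCinf {x : X} (hx : x ∈ opCinf A D) (m : ℕ) : A^[m] x ∈ opCinf A D :=
  fun k => by rw [← iterate_add_apply]; exact hx (k + m)

theorem mem_opCinf_of_forall_mem_opDom {n : ℕ → ℕ} (hn : StrictMono n) {x : X}
    (hx : ∀ j, x ∈ opDom A D (n j)) : x ∈ opCinf A D :=
  fun k => hx (k + 1) k ((Nat.lt_succ_self k).trans_le (hn.id_le _))

end Domains

namespace IsLinearOn

variable {𝕜 X : Type*} [RCLike 𝕜] [NormedAddCommGroup X] [NormedSpace 𝕜 X]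
  {A : X → X} {D : Submodule 𝕜 X} {n : ℕ}

theorem map_zero (hA : IsLinearOn 𝕜 A D) : A 0 = 0 := by
  simpa using hA.1 0 D.zero_mem 0 D.zero_mem

theorem iterate_map_zero (hA : IsLinearOn 𝕜 A D) (n : ℕ) : A^[n] 0 = 0 :=
  iterate_fixed hA.map_zero n

theorem zero_mem_opDom (hA : IsLinearOn 𝕜 A D) : (0 : X) ∈ opDom A D n :=
  fun k _ => by rw [hA.iterate_map_zero]; exact D.zero_mem

theorem iterate_add (hA : IsLinearOn 𝕜 A D) {x y : X} (hx : x ∈ opDom A D n)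
    (hy : y ∈ opDom A D n) : ∀ k ≤ n, A^[k] (x + y) = A^[k] x + A^[k] y
  | 0, _ => rfl
  | k + 1, hk => by
    simp only [iterate_succ_apply']
    rw [hA.iterate_add hx hy k (by omega)]
    exact hA.1 _ (hx k hk) _ (hy k hk)

theorem add_mem_opDom (hA : IsLinearOn 𝕜 A D) {x y : X} (hx : x ∈ opDom A D n)
    (hy : y ∈ opDom A D n) : x + y ∈ opDom A D n :=
  fun k hk => by
    rw [hA.iterate_add hx hy k hk.le]
    exact D.add_mem (hx k hk) (hy k hk)

theorem sum_mem_opDom_and_iterate_sum (hA : IsLinearOn 𝕜 A D) {ι : Type*} (s : Finset ι)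
    {g : ι → X} (hg : ∀ i, g i ∈ opDom A D n) :
    ∑ i ∈ s, g i ∈ opDom A D n ∧ A^[n] (∑ i ∈ s, g i) = ∑ i ∈ s, A^[n] (g i) := by
  classical
  induction s using Finset.induction_on with
  | empty => exact ⟨hA.zero_mem_opDom, hA.iterate_map_zero n⟩
  | insert i s hi ih =>
    rw [Finset.sum_insert hi, Finset.sum_insert hi]
    exact ⟨hA.add_mem_opDom (hg i) ih.1,
      by rw [hA.iterate_add (hg i) ih.1 n le_rfl, ih.2]⟩

theorem hasSum_iterate (hA : IsLinearOn 𝕜 A D) (hcl : ClosedPower A D n) {ι : Type*}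
    {g : ι → X} {x y : X} (hg : ∀ i, g i ∈ opDom A D n) (hx : HasSum g x)
    (hy : HasSum (fun i => A^[n] (g i)) y) : x ∈ opDom A D n ∧ A^[n] x = y := by
  have hlim := hcl.mem_of_tendsto (hx.prodMk_nhds hy) (Eventually.of_forall fun s =>
    ⟨(hA.sum_mem_opDom_and_iterate_sum s hg).1, (hA.sum_mem_opDom_and_iterate_sum s hg).2.symm⟩)
  exact ⟨hlim.1, hlim.2.symm⟩

theorem ne_zero_of_denseRange_iterate [Nontrivial X] (hA : IsLinearOn 𝕜 A D) {f : X}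
    (hf : DenseRange fun n => A^[n] f) : f ≠ 0 := by
  rintro rfl
  obtain ⟨x, hx⟩ := exists_ne (0 : X)
  have hx0 := hf x
  simp only [hA.iterate_map_zero, range_const, closure_singleton] at hx0
  exact hx hx0

end IsLinearOn

section TwoSidedOrbit

variable {X : Type*} {A B : X → X} {Y : Set X} {f : X}

def twoSidedOrbit (A B : X → X) (f : X) : ℤ → X
  | (n : ℕ) => A^[n] f
  | Int.negSucc n => B^[n + 1] f

@[simp]
theorem twoSidedOrbit_zero : twoSidedOrbit A B f 0 = f := rfl

theorem apply_twoSidedOrbit (hB : MapsTo B Y Y) (hAB : ∀ y ∈ Y, A (B y) = y) (hf : f ∈ Y) :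
    ∀ k : ℤ, A (twoSidedOrbit A B f k) = twoSidedOrbit A B f (k + 1)
  | (n : ℕ) => (iterate_succ_apply' A n f).symm
  | Int.negSucc 0 => hAB f hf
  | Int.negSucc (n + 1) => by
    change A (B^[n + 2] f) = B^[n + 1] f
    rw [iterate_succ_apply']
    exact hAB _ (hB.iterate (n + 1) hf)

theorem iterate_twoSidedOrbit (hB : MapsTo B Y Y) (hAB : ∀ y ∈ Y, A (B y) = y) (hf : f ∈ Y)
    (k : ℤ) : ∀ n : ℕ, A^[n] (twoSidedOrbit A B f k) = twoSidedOrbit A B f (k + n)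
  | 0 => by simp
  | n + 1 => by
    rw [iterate_succ_apply', iterate_twoSidedOrbit hB hAB hf k n,
      apply_twoSidedOrbit hB hAB hf, Nat.cast_succ, add_assoc]

theorem twoSidedOrbit_mem_opCinf {D : Set X} (hY : Y ⊆ opCinf A D) (hB : MapsTo B Y Y)
    (hf : f ∈ Y) : ∀ k : ℤ, twoSidedOrbit A B f k ∈ opCinf A D
  | (n : ℕ) => iterate_mem_opCinf (hY hf) n
  | Int.negSucc n => hY (hB.iterate (n + 1) hf)

end TwoSidedOrbit

section Decay

variable {X : Type*} [NormedAddCommGroup X] {A B : X → X} {f : X} {α c : ℝ}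

def HasGeometricDecay (A B : X → X) (f : X) : Prop :=
  ∃ α ∈ Ioo (0 : ℝ) 1, ∃ c > 0, ∀ n : ℕ, 0 < n → max ‖A^[n] f‖ ‖B^[n] f‖ ≤ c * α ^ n

theorem norm_twoSidedOrbit_le
    (hf : ∀ n : ℕ, 0 < n → max ‖A^[n] f‖ ‖B^[n] f‖ ≤ c * α ^ n) :
    ∀ k : ℤ, k ≠ 0 → ‖twoSidedOrbit A B f k‖ ≤ c * α ^ k.natAbs
  | (n : ℕ), hk => (le_max_left _ _).trans (hf n (by omega))
  | Int.negSucc n, _ => (le_max_right _ _).trans (hf (n + 1) n.succ_pos)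

theorem norm_twoSidedOrbit_mul_le
    (hf : ∀ n : ℕ, 0 < n → max ‖A^[n] f‖ ‖B^[n] f‖ ≤ c * α ^ n) {m : ℤ} (hm : m ≠ 0) {N : ℕ}
    (hN : 0 < N) : ‖twoSidedOrbit A B f (m * N)‖ ≤ c * (α ^ m.natAbs) ^ N := by
  have h := norm_twoSidedOrbit_le hf (m * N) (mul_ne_zero hm (by positivity))
  rwa [Int.natAbs_mul, Int.natAbs_natCast, pow_mul] at h

theorem summable_geometric_natAbs (hα₀ : 0 ≤ α) (hα₁ : α < 1) :
    Summable fun k : ℤ => c * α ^ k.natAbs := by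
  have h := (summable_geometric_of_lt_one hα₀ hα₁).mul_left c
  exact .of_nat_of_neg (by simpa using h) (by simpa using h)

theorem tendsto_tsum_twoSidedOrbit [CompleteSpace X] (hα₀ : 0 ≤ α) (hα₁ : α < 1)
    (hc : 0 ≤ c) (hf : ∀ n : ℕ, 0 < n → max ‖A^[n] f‖ ‖B^[n] f‖ ≤ c * α ^ n) :
    (∀ N : ℕ, Summable fun m : ℤ => twoSidedOrbit A B f (m * (N + 1 : ℕ))) ∧
      Tendsto (fun N : ℕ => ∑' m : ℤ, twoSidedOrbit A B f (m * (N + 1 : ℕ))) atTop (𝓝 f) := by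
  have hbound : ∀ (N : ℕ) (m : ℤ),
      ‖twoSidedOrbit A B f (m * (N + 1 : ℕ))‖ ≤ max c ‖f‖ * α ^ m.natAbs := by
    intro N m
    rcases eq_or_ne m 0 with rfl | hm
    · simp
    calc ‖twoSidedOrbit A B f (m * (N + 1 : ℕ))‖ ≤ c * (α ^ m.natAbs) ^ (N + 1) :=
          norm_twoSidedOrbit_mul_le hf hm N.succ_pos
      _ ≤ max c ‖f‖ * α ^ m.natAbs :=
          mul_le_mul (le_max_left _ _)
            (pow_le_of_le_one (by positivity) (pow_le_one₀ hα₀ hα₁.le) N.succ_ne_zero)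
            (by positivity) (hc.trans (le_max_left _ _))
  have hsum := summable_geometric_natAbs (c := max c ‖f‖) hα₀ hα₁
  refine ⟨fun N => hsum.of_norm_bounded (hbound N), ?_⟩
  have hlim : ∀ m : ℤ, Tendsto (fun N : ℕ => twoSidedOrbit A B f (m * (N + 1 : ℕ))) atTop
      (𝓝 (if m = 0 then f else 0)) := by
    intro m
    rcases eq_or_ne m 0 with rfl | hm
    · simp
    rw [if_neg hm]
    have hdecay : Tendsto (fun N : ℕ => c * (α ^ m.natAbs) ^ (N + 1)) atTop (𝓝 0) := by
      simpa using ((tendsto_pow_atTop_nhds_zero_of_lt_one (pow_nonneg hα₀ m.natAbs)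
        (pow_lt_one₀ hα₀ hα₁ (by omega))).comp (tendsto_add_atTop_nat 1)).const_mul c
    exact squeeze_zero_norm (fun N => norm_twoSidedOrbit_mul_le hf hm N.succ_pos) hdecay
  simpa using tendsto_tsum_of_dominated_convergence hsum hlim
    (Eventually.of_forall hbound)

end Decay

section Periodic

variable {𝕜 X : Type*} [RCLike 𝕜] [NormedAddCommGroup X] [NormedSpace 𝕜 X]
  {A B : X → X} {D : Submodule 𝕜 X} {Y : Set X} {f : X}

theorem periodicPt_tsum_twoSidedOrbit (hA : IsLinearOn 𝕜 A D) {N : ℕ} (hN : 0 < N)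
    (hcl : ClosedPower A D N) (hY : Y ⊆ opCinf A D) (hB : MapsTo B Y Y)
    (hAB : ∀ y ∈ Y, A (B y) = y) (hf : f ∈ Y)
    (hs : Summable fun m : ℤ => twoSidedOrbit A B f (m * N)) :
    PeriodicPt A D (∑' m : ℤ, twoSidedOrbit A B f (m * N)) := by
  have hshift : HasSum (fun m : ℤ => A^[N] (twoSidedOrbit A B f (m * N)))
      (∑' m : ℤ, twoSidedOrbit A B f (m * N)) := by
    convert (Equiv.addRight (1 : ℤ)).hasSum_iff.mpr hs.hasSum using 2 with m
    simp [iterate_twoSidedOrbit hB hAB hf, add_mul]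
  obtain ⟨hdom, hfix⟩ := hA.hasSum_iterate hcl
    (fun _ => opCinf_subset_opDom N (twoSidedOrbit_mem_opCinf hY hB hf _)) hs.hasSum hshift
  exact ⟨N, hN, hdom, hfix⟩

theorem dense_periodicPt [CompleteSpace X] (hA : IsLinearOn 𝕜 A D)
    (hcl : ∀ n : ℕ, 0 < n → ClosedPower A D n) (hY : Y ⊆ opCinf A D) (hYd : Dense Y)
    (hB : MapsTo B Y Y) (hAB : ∀ y ∈ Y, A (B y) = y)
    (hdecay : ∀ y ∈ Y, HasGeometricDecay A B y) : Dense {f | PeriodicPt A D f} := by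
  refine dense_closure.mp (hYd.mono fun f hf => ?_)
  obtain ⟨α, hα, c, hc, hfc⟩ := hdecay f hf
  obtain ⟨hs, hlim⟩ := tendsto_tsum_twoSidedOrbit (A := A) (B := B) hα.1.le hα.2 hc.le hfc
  exact mem_closure_of_tendsto hlim (Eventually.of_forall fun N =>
    periodicPt_tsum_twoSidedOrbit hA N.succ_pos (hcl _ N.succ_pos) hY hB hAB hf (hs N))

end Periodic

/-- Consecutive gaps `d j` are chosen so large that `φ i (d j) ≤ 4⁻ʲ` for all `i ≤ j`; since
`|n j - n i|` is at least the later of the two gaps `d i`, `d j`, this controls every pair. -/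
theorem exists_sparse_strictMono (φ : ℕ → ℕ → ℝ) (hφ : ∀ i, Antitone (φ i))
    (hφ₀ : ∀ i, Tendsto (φ i) atTop (𝓝 0)) :
    ∃ n : ℕ → ℕ, StrictMono n ∧ (∀ i, 0 < n i ∧ φ i (n i) ≤ (1 / 2) ^ i) ∧
      ∀ i j, i ≠ j → φ i ((n j : ℤ) - n i).natAbs ≤ (1 / 2) ^ j * (1 / 2) ^ i := by
  have hgap : ∀ j, ∃ d, 0 < d ∧ ∀ i ≤ j, φ i d ≤ (1 / 4) ^ j := fun j =>
    ((eventually_gt_atTop 0).and ((Set.finite_Iic j).eventually_all.2 fun i _ =>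
      (hφ₀ i).eventually_le_const (by positivity))).exists
  choose d hd₀ hd using hgap
  set n : ℕ → ℕ := fun j => ∑ k ∈ Finset.range (j + 1), d k
  have hn_succ : ∀ j, n (j + 1) = n j + d (j + 1) := fun j => Finset.sum_range_succ _ _
  have hn : StrictMono n := strictMono_nat_of_lt_succ fun j => by
    rw [hn_succ]; have := hd₀ (j + 1); omega
  have hd_le : ∀ j, d j ≤ n j := fun j =>
    Finset.single_le_sum (fun _ _ => Nat.zero_le _) (Finset.self_mem_range_succ j)
  have hd_le_sub : ∀ i j, i < j → d j ≤ n j - n i := by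
    rintro i (_ | j) hij
    · omega
    · have := hn.monotone (Nat.le_of_lt_succ hij); rw [hn_succ]; omega
  have hquarter : ∀ i j, i ≤ j → (1 / 4 : ℝ) ^ j ≤ (1 / 2) ^ j * (1 / 2) ^ i := fun i j hij => by
    rw [show (1 / 4 : ℝ) = 1 / 2 * (1 / 2) by norm_num, mul_pow]
    exact mul_le_mul_of_nonneg_left (pow_le_pow_of_le_one (by norm_num) (by norm_num) hij)
      (by positivity)
  refine ⟨n, hn, fun i => ⟨(hd₀ i).trans_le (hd_le i), ?_⟩, fun i j hij => ?_⟩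
  · exact (hφ i (hd_le i)).trans ((hd i i le_rfl).trans
      (pow_le_pow_left₀ (by norm_num) (by norm_num) i))
  rcases hij.lt_or_gt with h | h
  · have habs : ((n j : ℤ) - n i).natAbs = n j - n i := by have := hn h; omega
    rw [habs]
    exact (hφ i (hd_le_sub i j h)).trans ((hd j i h.le).trans (hquarter i j h.le))
  · have habs : ((n j : ℤ) - n i).natAbs = n i - n j := by have := hn h; omega
    rw [habs, mul_comm]
    exact (hφ i (hd_le_sub j i h)).trans ((hd i i le_rfl).trans (hquarter j i h.le))

theorem summable_and_norm_tsum_sub_le {X : Type*} [NormedAddCommGroup X] [CompleteSpace X]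
    {T : ℕ → X} {j : ℕ} {ε : ℝ} (hε : 0 ≤ ε) (hT : ∀ i, i ≠ j → ‖T i‖ ≤ ε * (1 / 2) ^ i) :
    Summable T ∧ ‖∑' i, T i - T j‖ ≤ 2 * ε := by
  classical
  have hgeom : HasSum (fun i : ℕ => ε * (1 / 2) ^ i) (ε * 2) := hasSum_geometric_two.mul_left ε
  have hs : Summable T :=
    .of_norm_bounded_eventually hgeom.summable ((eventually_cofinite_ne j).mono hT)
  refine ⟨hs, ?_⟩
  rw [hs.tsum_eq_add_tsum_ite j, add_sub_cancel_left, mul_comm]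
  refine tsum_of_norm_bounded hgeom fun i => ?_
  split_ifs with h
  · rw [norm_zero]; positivity
  · exact hT i h

theorem denseRange_of_tendsto_dist_unpair {X : Type*} [PseudoMetricSpace X] {e w : ℕ → X}
    (he : DenseRange e) (hw : Tendsto (fun j => dist (w j) (e (Nat.unpair j).1)) atTop (𝓝 0)) :
    DenseRange w := by
  refine Metric.denseRange_iff.2 fun x r hr => ?_
  obtain ⟨k, hk⟩ := Metric.denseRange_iff.1 he x (r / 2) (half_pos hr)
  obtain ⟨M, hM⟩ := eventually_atTop.1 (hw.eventually (gt_mem_nhds (half_pos hr)))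
  have hclose := hM (Nat.pair k M) (Nat.right_le_pair k M)
  rw [Nat.unpair_pair] at hclose
  refine ⟨Nat.pair k M, ?_⟩
  calc dist x (w (Nat.pair k M)) ≤ dist x (e k) + dist (e k) (w (Nat.pair k M)) :=
        dist_triangle _ _ _
    _ < r / 2 + r / 2 := add_lt_add hk (by rwa [dist_comm])
    _ = r := add_halves r

section Hypercyclic

variable {𝕜 X : Type*} [RCLike 𝕜] [NormedAddCommGroup X] [NormedSpace 𝕜 X] [CompleteSpace X]
  {A B : X → X} {D : Submodule 𝕜 X} {Y : Set X}

theorem exists_mem_opCinf_dist_iterate_le (hA : IsLinearOn 𝕜 A D)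
    (hcl : ∀ n : ℕ, 0 < n → ClosedPower A D n) (hY : Y ⊆ opCinf A D) (hB : MapsTo B Y Y)
    (hAB : ∀ y ∈ Y, A (B y) = y) {y : ℕ → X} (hy : ∀ j, y j ∈ Y)
    (hdecay : ∀ j, HasGeometricDecay A B (y j)) :
    ∃ f ∈ opCinf A D, ∃ n : ℕ → ℕ, ∀ j, dist (A^[n j] f) (y j) ≤ 2 * (1 / 2) ^ j := by
  choose α hα c hc hyc using hdecay
  obtain ⟨n, hn, hn₀, hnn⟩ := exists_sparse_strictMono (fun i m => c i * α i ^ m)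
    (fun i _ _ h => mul_le_mul_of_nonneg_left
      (pow_le_pow_of_le_one (hα i).1.le (hα i).2.le h) (hc i).le)
    (fun i => by simpa using (tendsto_pow_atTop_nhds_zero_of_lt_one (hα i).1.le
      (hα i).2).const_mul (c i))
  have horb := fun i => norm_twoSidedOrbit_le (A := A) (B := B) (hyc i)
  have hg : Summable fun i => twoSidedOrbit A B (y i) (-(n i)) := by
    refine summable_geometric_two.of_norm_bounded fun i => ?_
    have h := horb i (-(n i)) (by have := (hn₀ i).1; omega)
    rw [Int.natAbs_neg, Int.natAbs_natCast] at h
    exact h.trans (hn₀ i).2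
  have hT : ∀ j, Summable (fun i => twoSidedOrbit A B (y i) (n j - n i)) ∧
      ‖∑' i, twoSidedOrbit A B (y i) (n j - n i) - y j‖ ≤ 2 * (1 / 2) ^ j := fun j => by
    simpa using summable_and_norm_tsum_sub_le (T := fun i => twoSidedOrbit A B (y i) (n j - n i))
      (by positivity) fun i hij =>
        (horb i _ (by have := hn.injective.ne hij; omega)).trans (hnn i j hij)
  have hAf : ∀ j, ∑' i, twoSidedOrbit A B (y i) (-(n i)) ∈ opDom A D (n j) ∧
      A^[n j] (∑' i, twoSidedOrbit A B (y i) (-(n i))) =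
        ∑' i, twoSidedOrbit A B (y i) (n j - n i) := fun j =>
    hA.hasSum_iterate (hcl _ (hn₀ j).1)
      (fun i => opCinf_subset_opDom _ (twoSidedOrbit_mem_opCinf hY hB (hy i) _)) hg.hasSum
      (by simpa [iterate_twoSidedOrbit hB hAB (hy _), neg_add_eq_sub] using (hT j).1.hasSum)
  refine ⟨_, mem_opCinf_of_forall_mem_opDom hn fun j => (hAf j).1, n, fun j => ?_⟩
  rw [dist_eq_norm, (hAf j).2]
  exact (hT j).2

theorem exists_denseRange_iterate [SeparableSpace X] (hA : IsLinearOn 𝕜 A D)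
    (hcl : ∀ n : ℕ, 0 < n → ClosedPower A D n) (hY : Y ⊆ opCinf A D) (hYd : Dense Y)
    (hB : MapsTo B Y Y) (hAB : ∀ y ∈ Y, A (B y) = y)
    (hdecay : ∀ y ∈ Y, HasGeometricDecay A B y) :
    ∃ f ∈ opCinf A D, DenseRange fun n => A^[n] f := by
  have : Nonempty Y := hYd.nonempty.to_subtype
  obtain ⟨e, he⟩ := exists_dense_seq Y
  obtain ⟨f, hf, n, hfn⟩ := exists_mem_opCinf_dist_iterate_le hA hcl hY hB hAB
    (y := fun j => e (Nat.unpair j).1) (fun _ => (e _).2) (fun _ => hdecay _ (e _).2)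
  have hlim : Tendsto (fun j : ℕ => 2 * (1 / 2 : ℝ) ^ j) atTop (𝓝 0) := by
    simpa using (tendsto_pow_atTop_nhds_zero_of_lt_one (r := (1 / 2 : ℝ)) (by norm_num)
      (by norm_num)).const_mul 2
  refine ⟨f, hf, Dense.mono (range_comp_subset_range n fun m => A^[m] f) ?_⟩
  exact denseRange_of_tendsto_dist_unpair (hYd.denseRange_val.comp he continuous_subtype_val)
    (squeeze_zero (fun _ => dist_nonneg) hfn hlim)

end Hypercyclic

theorem sufficient_condition_for_linear_chaos_general
    {𝕜 X : Type*} [RCLike 𝕜] [NormedAddCommGroup X] [NormedSpace 𝕜 X]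
    [CompleteSpace X] [SeparableSpace X]
    (hinfdim : ¬ FiniteDimensional 𝕜 X)
    (D : Submodule 𝕜 X) (A : X → X)
    (hlin : IsLinearOn 𝕜 A (D : Set X))
    (hcl : ∀ n : ℕ, 0 < n → ClosedPower A (D : Set X) n)
    (Y : Set X) (hYsub : Y ⊆ opCinf A (D : Set X)) (hYdense : Dense Y)
    (B : X → X) (hBmaps : Set.MapsTo B Y Y)
    (h1 : ∀ f ∈ Y, A (B f) = f)
    (h2 : ∀ f ∈ Y, ∃ α ∈ Set.Ioo (0 : ℝ) 1, ∃ c > 0,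
      ∀ n : ℕ, 0 < n → max ‖A^[n] f‖ ‖B^[n] f‖ ≤ c * α ^ n)
    :
    ChaoticOp A (D : Set X) := by
  have : Nontrivial X := not_subsingleton_iff_nontrivial.mp fun _ => hinfdim inferInstance
  obtain ⟨f, hf, hdense⟩ := exists_denseRange_iterate hlin hcl hYsub hYdense hBmaps h1 h2
  exact ⟨⟨f, hf, hlin.ne_zero_of_denseRange_iterate hdense, hdense⟩,
    dense_periodicPt hlin hcl hYsub hYdense hBmaps h1 h2⟩

/-- **Sufficient Condition for Linear Chaos.** -/
theorem sufficient_condition_for_linear_chaos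
    {𝕜 X : Type*} [RCLike 𝕜] [NormedAddCommGroup X] [NormedSpace 𝕜 X]
    [CompleteSpace X] [SeparableSpace X]
    (hinfdim : ¬ FiniteDimensional 𝕜 X)
    (D : Submodule 𝕜 X) (A : X → X)
    (hlin : IsLinearOn 𝕜 A (D : Set X))
    (hdd : Dense (D : Set X))
    (hcl : ∀ n : ℕ, 0 < n → ClosedPower A (D : Set X) n)
    (Y : Set X) (hYsub : Y ⊆ opCinf A (D : Set X)) (hYdense : Dense Y)
    (B : X → X) (hBmaps : Set.MapsTo B Y Y)
    (h1 : ∀ f ∈ Y, A (B f) = f)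
    (h2 : ∀ f ∈ Y, ∃ α ∈ Set.Ioo (0 : ℝ) 1, ∃ c > 0,
      ∀ n : ℕ, 0 < n → max ‖A^[n] f‖ ‖B^[n] f‖ ≤ c * α ^ n)
    :
    ChaoticOp A (D : Set X) :=
  sufficient_condition_for_linear_chaos_general hinfdim D A hlin hcl Y hYsub hYdense B hBmaps h1 h2
end

section
/- Hypercyclicity of the inverse: Let X be a (real or complex) infinite-dimensional separable Banach space and let A be a densely defined linear operator in X such that every power A^n (n ∈ ℕ) is a closed operator, and suppose there exist a set Y ⊆ C^∞(A) dense in X and a mapping B : Y → Y such that (1) ABf = f for every f ∈ Y and (2) for every f ∈ Y, A^n f → 0 and B^n f → 0 as n → ∞. If A is injective, has range R(A) = X, and its inverse A^{-1} is a bounded linear operator on X, then A^{-1} is hypercyclic. -/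
open Filter Topology TopologicalSpace

/-!
Birkhoff's transitivity theorem reduces hypercyclicity of `A⁻¹` to topological
transitivity: in a separable Banach space, the points whose orbit meets every member of a
countable basis form a dense `G_δ`. Transitivity is Kitai's criterion with `T = A⁻¹` and
`S = A`: for `y, z ∈ Y` the vectors `y + Aⁿz` tend to `y`, while `A⁻ⁿ(y + Aⁿz) = Bⁿy + z`
tends to `z`, because `A⁻¹` agrees with `B` on the `B`-invariant set `Y`.
-/

open Set

theorem Set.EqOn.iterate_of_mapsTo {α : Type*} {f g : α → α} {s : Set α} (h : EqOn f g s)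
    (hg : MapsTo g s s) (n : ℕ) : EqOn f^[n] g^[n] s := by
  induction n with
  | zero => exact eqOn_refl _ _
  | succ n ih =>
    intro x hx
    rw [Function.iterate_succ_apply', Function.iterate_succ_apply', ih hx,
      h (hg.iterate n hx)]

theorem Set.LeftInvOn.iterate_opCinf {α : Type*} {g A : α → α} {D : Set α}
    (h : LeftInvOn g A D) (n : ℕ) : LeftInvOn g^[n] A^[n] (opCinf A D) := by
  induction n with
  | zero => exact fun _ _ => rfl
  | succ n ih =>
    intro x hx
    rw [Function.iterate_succ_apply, Function.iterate_succ_apply', h (hx n), ih hx]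

/-- Birkhoff's transitivity theorem. -/
theorem dense_setOf_dense_range_iterate {X : Type*} [TopologicalSpace X] [BaireSpace X]
    [SecondCountableTopology X] {T : X → X} (hT : Continuous T)
    (htrans : ∀ U V : Set X, IsOpen U → U.Nonempty → IsOpen V → V.Nonempty →
      ∃ n, (U ∩ T^[n] ⁻¹' V).Nonempty) :
    Dense {x | Dense (range fun n => T^[n] x)} := by
  let 𝓑 := countableBasis X
  have h𝓑 : IsTopologicalBasis 𝓑 := isBasis_countableBasis X
  have hopen : ∀ V ∈ 𝓑, IsOpen (⋃ n, T^[n] ⁻¹' V) := fun V hV =>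
    isOpen_iUnion fun n => (h𝓑.isOpen hV).preimage (hT.iterate n)
  have hdense : ∀ V ∈ 𝓑, Dense (⋃ n, T^[n] ⁻¹' V) := by
    intro V hV
    refine dense_iff_inter_open.2 fun U hU hUne => ?_
    obtain ⟨n, x, hxU, hxV⟩ :=
      htrans U V hU hUne (h𝓑.isOpen hV) (nonempty_of_mem_countableBasis hV)
    exact ⟨x, hxU, mem_iUnion.2 ⟨n, hxV⟩⟩
  refine (dense_biInter_of_isOpen hopen (countable_countableBasis X) hdense).mono ?_
  intro x hx
  refine h𝓑.dense_iff.2 fun V hV _ => ?_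
  obtain ⟨n, hn⟩ := mem_iUnion.1 (mem_iInter₂.1 hx V hV)
  exact ⟨T^[n] x, hn, n, rfl⟩

/-- Kitai's criterion, in the form giving topological transitivity. -/
theorem exists_inter_preimage_iterate_nonempty_of_kitai {X F : Type*} [AddZeroClass X]
    [TopologicalSpace X] [ContinuousAdd X] [FunLike F X X] [AddHomClass F X X] (T : F)
    (S : X → X) {Y Z : Set X} (hY : Dense Y) (hZ : Dense Z)
    (hTY : ∀ y ∈ Y, Tendsto (fun n => T^[n] y) atTop (𝓝 0))
    (hSZ : ∀ z ∈ Z, Tendsto (fun n => S^[n] z) atTop (𝓝 0))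
    (hTS : ∀ n, LeftInvOn T^[n] S^[n] Z)
    (U V : Set X) (hU : IsOpen U) (hUne : U.Nonempty) (hV : IsOpen V) (hVne : V.Nonempty) :
    ∃ n, (U ∩ T^[n] ⁻¹' V).Nonempty := by
  obtain ⟨y, hyU, hyY⟩ := hY.inter_open_nonempty U hU hUne
  obtain ⟨z, hzV, hzZ⟩ := hZ.inter_open_nonempty V hV hVne
  have hto_y : Tendsto (fun n => y + S^[n] z) atTop (𝓝 y) := by
    simpa using tendsto_const_nhds.add (hSZ z hzZ)
  have hto_z : Tendsto (fun n => T^[n] (y + S^[n] z)) atTop (𝓝 z) := by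
    simp only [iterate_map_add, hTS _ hzZ]
    simpa using (hTY y hyY).add (tendsto_const_nhds (x := z))
  obtain ⟨n, hnU, hnV⟩ :=
    ((hto_y.eventually (hU.mem_nhds hyU)).and (hto_z.eventually (hV.mem_nhds hzV))).exists
  exact ⟨n, y + S^[n] z, hnU, hnV⟩

theorem hypercyclicity_of_inverse_general
    {𝕜 X : Type*} [RCLike 𝕜] [NormedAddCommGroup X] [NormedSpace 𝕜 X]
    [CompleteSpace X] [SeparableSpace X]
    (hinfdim : ¬ FiniteDimensional 𝕜 X)
    (D : Submodule 𝕜 X) (A : X → X)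
    (Y : Set X) (hYsub : Y ⊆ opCinf A (D : Set X)) (hYdense : Dense Y)
    (B : X → X) (hBmaps : Set.MapsTo B Y Y)
    (h1 : ∀ f ∈ Y, A (B f) = f)
    (h2 : ∀ f ∈ Y, Filter.Tendsto (fun n : ℕ => A^[n] f) Filter.atTop (nhds 0) ∧
      Filter.Tendsto (fun n : ℕ => B^[n] f) Filter.atTop (nhds 0))
    (Ainv : X →L[𝕜] X)
    (hAinv : ∀ x ∈ (D : Set X), Ainv (A x) = x) :
    HypercyclicOp (⇑Ainv) (Set.univ : Set X) := by
  have : Nontrivial X := by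
    by_contra h
    have := not_nontrivial_iff_subsingleton.1 h
    exact hinfdim inferInstance
  have hAinvB : EqOn Ainv B Y := fun f hf =>
    (congrArg Ainv (h1 f hf)).symm.trans (hAinv _ (hYsub (hBmaps hf) 0))
  have htrans := exists_inter_preimage_iterate_nonempty_of_kitai Ainv A hYdense hYdense
    (fun y hy => ((h2 y hy).2.congr fun n => (hAinvB.iterate_of_mapsTo hBmaps n hy).symm))
    (fun z hz => (h2 z hz).1)
    (fun n => (LeftInvOn.iterate_opCinf hAinv n).mono hYsub)
  obtain ⟨f, hf0, hf⟩ :=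
    (dense_setOf_dense_range_iterate Ainv.continuous htrans).inter_open_nonempty _
      isOpen_compl_singleton (exists_ne (0 : X))
  exact ⟨f, fun _ => trivial, hf0, hf⟩

/-- **Hypercyclicity of the inverse.** -/
theorem hypercyclicity_of_inverse
    {𝕜 X : Type*} [RCLike 𝕜] [NormedAddCommGroup X] [NormedSpace 𝕜 X]
    [CompleteSpace X] [SeparableSpace X]
    (hinfdim : ¬ FiniteDimensional 𝕜 X)
    (D : Submodule 𝕜 X) (A : X → X)
    (hlin : IsLinearOn 𝕜 A (D : Set X))
    (hdd : Dense (D : Set X))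
    (hcl : ∀ n : ℕ, 0 < n → ClosedPower A (D : Set X) n)
    (Y : Set X) (hYsub : Y ⊆ opCinf A (D : Set X)) (hYdense : Dense Y)
    (B : X → X) (hBmaps : Set.MapsTo B Y Y)
    (h1 : ∀ f ∈ Y, A (B f) = f)
    (h2 : ∀ f ∈ Y, Filter.Tendsto (fun n : ℕ => A^[n] f) Filter.atTop (nhds 0) ∧
      Filter.Tendsto (fun n : ℕ => B^[n] f) Filter.atTop (nhds 0))
    (hinj : Set.InjOn A (D : Set X))
    (hsurj : A '' (D : Set X) = Set.univ)
    (Ainv : X →L[𝕜] X)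
    (hAinv : ∀ x ∈ (D : Set X), Ainv (A x) = x) :
    HypercyclicOp (⇑Ainv) (Set.univ : Set X) :=
  hypercyclicity_of_inverse_general hinfdim D A Y hYsub hYdense B hBmaps h1 h2 Ainv hAinv
end

section
/- Necessary condition for hypercyclicity (unbounded adjoint orbits): Let X be an infinite-dimensional separable Banach space over 𝕂 (𝕂 = ℝ or ℂ) and let A be a densely defined closed linear operator in X that is hypercyclic. Then there is no nonzero continuous linear functional g* ∈ X* admitting a bounded sequence (g_n)_{n∈ℤ₊} in X* with g_0 = g* and g_{n+1}(x) = g_n(Ax) for all n ∈ ℤ₊ and all x ∈ D(A). Equivalently: every g* ∈ C^∞(A*) \ {0} has unbounded orbit {(A*)^n g* : n ∈ ℤ₊} under the adjoint A*. -/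
/-!
If `f` is a hypercyclic vector and `(gₙ)` a bounded adjoint orbit of `g₀`, then
`g₀ (Aⁿ f) = gₙ f` stays bounded along the orbit of `f`; since the orbit is dense, `g₀` is a
bounded linear functional on the whole space, which forces `g₀ = 0`.
-/

open Filter Topology TopologicalSpace

theorem LinearMap.eq_zero_of_forall_norm_apply_le {𝕜 E F : Type*} [NontriviallyNormedField 𝕜]
    [AddCommGroup E] [Module 𝕜 E] [NormedAddCommGroup F] [NormedSpace 𝕜 F]
    (φ : E →ₗ[𝕜] F) {K : ℝ} (hK : ∀ x, ‖φ x‖ ≤ K) : φ = 0 := by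
  ext y
  by_contra hy
  have hy : 0 < ‖φ y‖ := norm_pos_iff.2 hy
  obtain ⟨c, hc⟩ := NormedField.exists_lt_norm 𝕜 (K / ‖φ y‖)
  have := hK (c • y)
  rw [map_smul, norm_smul] at this
  linarith [(div_lt_iff₀ hy).1 hc]

theorem map_mem_opCinf {X : Type*} {A : X → X} {D : Set X} {f : X} (hf : f ∈ opCinf A D) :
    A f ∈ opCinf A D := fun k => by
  simpa only [Function.iterate_succ_apply] using hf (k + 1)

theorem apply_iterate_eq_of_mem_opCinf {X Y : Type*} {A : X → X} {D : Set X} {g : ℕ → X → Y}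
    (hrec : ∀ n, ∀ x ∈ D, g (n + 1) x = g n (A x)) (n : ℕ) :
    ∀ {f}, f ∈ opCinf A D → g 0 (A^[n] f) = g n f := by
  induction n with
  | zero => intro f _; rfl
  | succ n ih =>
    intro f hf
    rw [Function.iterate_succ_apply, ih (map_mem_opCinf hf), hrec n f (hf 0)]

theorem necessary_condition_unbounded_adjoint_orbits_general
    {𝕜 X : Type*} [RCLike 𝕜] [NormedAddCommGroup X] [NormedSpace 𝕜 X]
    (D : Submodule 𝕜 X) (A : X → X)
    (hhc : HypercyclicOp A (D : Set X)) :
    ¬ ∃ g : ℕ → (X →L[𝕜] 𝕜), g 0 ≠ 0 ∧ (∃ C : ℝ, ∀ n : ℕ, ‖g n‖ ≤ C) ∧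
      (∀ n : ℕ, ∀ x ∈ (D : Set X), g (n + 1) x = g n (A x)) := by
  rintro ⟨g, hg0, ⟨C, hC⟩, hrec⟩
  obtain ⟨f, hf, -, hdense⟩ := hhc
  have horbit : ∀ n, ‖g 0 (A^[n] f)‖ ≤ C * ‖f‖ := fun n => by
    rw [apply_iterate_eq_of_mem_opCinf (g := fun n => ⇑(g n)) hrec n hf]
    exact (g n).le_of_opNorm_le (hC n) f
  have hbound : ∀ x, ‖g 0 x‖ ≤ C * ‖f‖ := fun x =>
    DenseRange.induction_on hdense x (isClosed_le (by fun_prop) continuous_const) horbit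
  exact hg0 (ContinuousLinearMap.coe_injective
    ((g 0 : X →ₗ[𝕜] 𝕜).eq_zero_of_forall_norm_apply_le hbound))

/-- **Necessary condition for linear hypercyclicity: unbounded adjoint orbits.**
A bounded sequence `g : ℕ → X*` with `g 0 = g*` and `g (n+1) x = g n (A x)` on
`D(A)` encodes a bounded orbit of `g*` under the adjoint `A*`. -/
theorem necessary_condition_unbounded_adjoint_orbits
    {𝕜 X : Type*} [RCLike 𝕜] [NormedAddCommGroup X] [NormedSpace 𝕜 X]
    [CompleteSpace X] [SeparableSpace X]
    (hinfdim : ¬ FiniteDimensional 𝕜 X)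
    (D : Submodule 𝕜 X) (A : X → X)
    (hlin : IsLinearOn 𝕜 A (D : Set X))
    (hdd : Dense (D : Set X))
    (hcl : ClosedPower A (D : Set X) 1)
    (hhc : HypercyclicOp A (D : Set X)) :
    ¬ ∃ g : ℕ → (X →L[𝕜] 𝕜), g 0 ≠ 0 ∧ (∃ C : ℝ, ∀ n : ℕ, ‖g n‖ ≤ C) ∧
      (∀ n : ℕ, ∀ x ∈ (D : Set X), g (n + 1) x = g n (A x)) :=
  necessary_condition_unbounded_adjoint_orbits_general D A hhc
end

section
/- Necessary condition for hypercyclicity (dense ranges): Let X be an infinite-dimensional separable Banach space over 𝕂 (𝕂 = ℝ or ℂ) and let A be a densely defined closed linear operator in X that is hypercyclic. Then for every λ ∈ 𝕂, the range R(A − λI) = {Ax − λx : x ∈ D(A)} is dense in X. In particular, in the complex case the residual spectrum of A is empty: there is no λ ∈ ℂ for which A − λI is injective and R(A − λI) is not dense in X. -/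
open Filter Topology TopologicalSpace

/-!
If `R(A - λ)` is not dense, Hahn–Banach gives a nonzero functional `φ` vanishing on it, so
`φ ∘ A = λ φ` on `D` and `φ` maps the orbit of a hypercyclic vector `f` onto the sequence
`λⁿ φ(f)`. As `φ` is a continuous surjection onto `𝕜`, this sequence would be dense in `𝕜`; but
its norms `‖λ‖ⁿ ‖φ f‖` are either bounded or bounded away from `0`.
-/

theorem not_denseRange_pow_mul {𝕜 : Type*} [NontriviallyNormedField 𝕜] (l c : 𝕜) :
    ¬ DenseRange fun n : ℕ => l ^ n * c := by
  intro hd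
  have hcover : ∀ F : Set 𝕜, IsClosed F → (∀ n : ℕ, l ^ n * c ∈ F) → ∀ z, z ∈ F :=
    fun F hF hsub z => hF.closure_subset (hd.mono (Set.range_subset_iff.2 hsub) z)
  by_cases hbdd : ‖l‖ ≤ 1 ∨ c = 0
  · obtain ⟨z, hz⟩ := NormedField.exists_lt_norm 𝕜 ‖c‖
    have hsub : ∀ n : ℕ, l ^ n * c ∈ Metric.closedBall 0 ‖c‖ := by
      intro n
      rw [mem_closedBall_zero_iff, norm_mul, norm_pow]
      rcases hbdd with hl | rfl
      · exact mul_le_of_le_one_left (norm_nonneg c) (pow_le_one₀ (norm_nonneg l) hl)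
      · simp
    have := hcover _ Metric.isClosed_closedBall hsub z
    rw [mem_closedBall_zero_iff] at this
    linarith
  · obtain ⟨hl, hc⟩ : 1 < ‖l‖ ∧ c ≠ 0 := by push Not at hbdd; exact hbdd
    have hsub : ∀ n : ℕ, l ^ n * c ∈ {z : 𝕜 | ‖c‖ ≤ ‖z‖} := by
      intro n
      rw [Set.mem_ofPred_eq, norm_mul, norm_pow]
      exact le_mul_of_one_le_left (norm_nonneg c) (one_le_pow₀ hl.le)
    have := hcover _ (isClosed_le continuous_const continuous_norm) hsub 0
    exact hc (norm_le_zero_iff.1 (by simpa using this))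

theorem Submodule.exists_strongDual_ne_zero_of_not_dense {𝕜 X : Type*} [RCLike 𝕜]
    [NormedAddCommGroup X] [NormedSpace 𝕜 X] {S : Submodule 𝕜 X} (hS : ¬ Dense (S : Set X)) :
    ∃ φ : StrongDual 𝕜 X, φ ≠ 0 ∧ ∀ z ∈ S, φ z = 0 := by
  set p := S.topologicalClosure
  obtain ⟨x, hx⟩ : ∃ x, x ∉ p := by
    by_contra! hall
    exact hS (Submodule.dense_iff_topologicalClosure_eq_top.2 (eq_top_iff.2 fun x _ => hall x))
  have : IsClosed (p : Set X) := S.isClosed_topologicalClosure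
  have hmk : ‖p.mkQL x‖ ≠ 0 := by
    rwa [norm_ne_zero_iff, Submodule.mkQL_apply, Submodule.mkQ_apply, ne_eq,
      Submodule.Quotient.mk_eq_zero]
  obtain ⟨g, -, hgx⟩ := exists_dual_vector 𝕜 (p.mkQL x) hmk
  refine ⟨g.comp p.mkQL, fun h => ?_, fun z hz => ?_⟩
  · have : (g.comp p.mkQL) x = 0 := by rw [h]; rfl
    rw [ContinuousLinearMap.comp_apply, hgx, RCLike.ofReal_eq_zero] at this
    exact hmk this
  · have : p.mkQL z = 0 := (Submodule.Quotient.mk_eq_zero p).2 (S.le_topologicalClosure hz)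
    rw [ContinuousLinearMap.comp_apply, this, map_zero]

theorem apply_iterate_eq_pow_mul {X M : Type*} [Monoid M] {A : X → X} {D : Set X}
    {φ : X → M} {l : M} (hφ : ∀ x ∈ D, φ (A x) = l * φ x) {f : X} (hf : f ∈ opCinf A D)
    (n : ℕ) : φ (A^[n] f) = l ^ n * φ f := by
  induction n with
  | zero => simp
  | succ n ih => rw [Function.iterate_succ_apply', hφ _ (hf n), ih, pow_succ', mul_assoc]

theorem HypercyclicOp.eq_zero_of_apply_eq_mul {𝕜 X : Type*} [NontriviallyNormedField 𝕜]
    [NormedAddCommGroup X] [NormedSpace 𝕜 X] {A : X → X} {D : Set X}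
    (hhc : HypercyclicOp A D) {φ : StrongDual 𝕜 X} {l : 𝕜}
    (hφ : ∀ x ∈ D, φ (A x) = l * φ x) : φ = 0 := by
  obtain ⟨f, hfC, -, hfd⟩ := hhc
  by_contra hφ0
  have hsurj : Function.Surjective φ :=
    LinearMap.surjective (f := (φ : X →ₗ[𝕜] 𝕜))
      (by rwa [ne_eq, ← ContinuousLinearMap.toLinearMap_zero, ContinuousLinearMap.coe_inj])
  have hφf : DenseRange (φ ∘ fun n : ℕ => A^[n] f) := hsurj.denseRange.comp hfd φ.continuous
  simp only [Function.comp_def, apply_iterate_eq_pow_mul hφ hfC] at hφf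
  exact not_denseRange_pow_mul l (φ f) hφf

section LinearOn

variable {𝕜 X : Type*} [RCLike 𝕜] [NormedAddCommGroup X] [NormedSpace 𝕜 X]
  {A : X → X} {D : Submodule 𝕜 X}

def IsLinearOn.toLinearMap (h : IsLinearOn 𝕜 A D) : D →ₗ[𝕜] X where
  toFun x := A x
  map_add' x y := h.1 x x.2 y y.2
  map_smul' c x := h.2 c x x.2

theorem IsLinearOn.coe_range_sub_smul (h : IsLinearOn 𝕜 A D) (l : 𝕜) :
    (LinearMap.range (h.toLinearMap - l • D.subtype) : Set X) =
      (fun x => A x - l • x) '' (D : Set X) := by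
  ext z
  simp [IsLinearOn.toLinearMap]

end LinearOn

theorem necessary_condition_dense_ranges_general
    {𝕜 X : Type*} [RCLike 𝕜] [NormedAddCommGroup X] [NormedSpace 𝕜 X]
    (D : Submodule 𝕜 X) (A : X → X)
    (hlin : IsLinearOn 𝕜 A (D : Set X))
    (hhc : HypercyclicOp A (D : Set X)) :
    (∀ l : 𝕜, Dense ((fun x => A x - l • x) '' (D : Set X))) ∧
    ¬ ∃ l : 𝕜, Set.InjOn (fun x => A x - l • x) (D : Set X) ∧
      ¬ Dense ((fun x => A x - l • x) '' (D : Set X)) := by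
  have hdense : ∀ l : 𝕜, Dense ((fun x => A x - l • x) '' (D : Set X)) := by
    intro l
    by_contra hnd
    rw [← hlin.coe_range_sub_smul l] at hnd
    obtain ⟨φ, hφ0, hφ⟩ := Submodule.exists_strongDual_ne_zero_of_not_dense hnd
    refine hφ0 (hhc.eq_zero_of_apply_eq_mul (l := l) fun x hx => ?_)
    have := hφ _ (LinearMap.mem_range_self _ ⟨x, hx⟩)
    simpa [IsLinearOn.toLinearMap, sub_eq_zero] using this
  exact ⟨hdense, fun ⟨l, _, hnd⟩ => hnd (hdense l)⟩

/-- **Necessary condition for linear hypercyclicity: dense ranges of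
`A - λI`; in particular the residual spectrum is empty.** -/
theorem necessary_condition_dense_ranges
    {𝕜 X : Type*} [RCLike 𝕜] [NormedAddCommGroup X] [NormedSpace 𝕜 X]
    [CompleteSpace X] [SeparableSpace X]
    (hinfdim : ¬ FiniteDimensional 𝕜 X)
    (D : Submodule 𝕜 X) (A : X → X)
    (hlin : IsLinearOn 𝕜 A (D : Set X))
    (hdd : Dense (D : Set X))
    (hcl : ClosedPower A (D : Set X) 1)
    (hhc : HypercyclicOp A (D : Set X)) :
    (∀ l : 𝕜, Dense ((fun x => A x - l • x) '' (D : Set X))) ∧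
    ¬ ∃ l : 𝕜, Set.InjOn (fun x => A x - l • x) (D : Set X) ∧
      ¬ Dense ((fun x => A x - l • x) '' (D : Set X)) :=
  necessary_condition_dense_ranges_general D A hlin hhc
end
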